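/- arXiv:1311.2749 — 5 statements merged into one kernel-verified Lean document; each statement's English description precedes it below -/
import Mathlib

section
/- Let G be a graph on n vertices, and let Q, X ⊆ V(G) be disjoint sets such that Q is an independent set of G. Suppose G − X admits a proper 3-coloring φ such that for every vertex v ∈ Q, all neighbors of v in G − X receive the same color under φ. Then G has an independent set of size at least (n − |X| + |Q|)/3. -/
open Set

/-- A set of vertices is independent: no two of its vertices are adjacent. -/
def SimpleGraph.IsIndep {V : Type} (G : SimpleGraph V) (s : Set V) : Prop :=
  ∀ ⦃u⦄, u ∈ s → ∀ ⦃v⦄, v ∈ s → ¬ G.Adj u v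

/-- A topological plane drawing of a simple graph: an injective placement of the
vertices in the plane together with pairwise internally disjoint arcs for the edges. -/
structure PlaneDrawing {V : Type} (G : SimpleGraph V) where
  pos : V → ℝ × ℝ
  pos_inj : Function.Injective pos
  arc : ∀ ⦃u v : V⦄, G.Adj u v → Path (pos u) (pos v)
  arc_symm : ∀ ⦃u v : V⦄ (h : G.Adj u v), arc h.symm = (arc h).symm
  arc_inj : ∀ ⦃u v : V⦄ (h : G.Adj u v), Function.Injective ⇑(arc h)
  arc_vertex : ∀ ⦃u v : V⦄ (h : G.Adj u v) (w : V),
      pos w ∈ Set.range ⇑(arc h) → w = u ∨ w = v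
  arc_arc : ∀ ⦃u v x y : V⦄ (h : G.Adj u v) (h' : G.Adj x y), s(u, v) ≠ s(x, y) →
      Set.range ⇑(arc h) ∩ Set.range ⇑(arc h') ⊆ ({pos u, pos v} ∩ {pos x, pos y} : Set (ℝ × ℝ))

/-- A graph is planar if it admits a plane drawing. -/
def SimpleGraph.IsPlanar {V : Type} (G : SimpleGraph V) : Prop :=
  Nonempty (PlaneDrawing G)

namespace PlaneDrawing

variable {V : Type} {G : SimpleGraph V} (D : PlaneDrawing G)

/-- The point set of the drawing. -/
def image : Set (ℝ × ℝ) :=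
  Set.range D.pos ∪ ⋃ (u : V) (v : V) (h : G.Adj u v), Set.range ⇑(D.arc h)

/-- Faces of the drawing: connected components of the complement of its image. -/
def IsFace (f : Set (ℝ × ℝ)) : Prop :=
  ∃ x ∉ D.image, f = connectedComponentIn D.imageᶜ x

/-- `f` is a 4-face of the drawing with boundary cycle `u v w x`. -/
def IsFace4 (f : Set (ℝ × ℝ)) (u v w x : V) : Prop :=
  D.IsFace f ∧ u ≠ w ∧ v ≠ x ∧
    ∃ (h1 : G.Adj u v) (h2 : G.Adj v w) (h3 : G.Adj w x) (h4 : G.Adj x u),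
      frontier f =
        Set.range ⇑(D.arc h1) ∪ Set.range ⇑(D.arc h2) ∪
        Set.range ⇑(D.arc h3) ∪ Set.range ⇑(D.arc h4)

/-- The closed curve in the plane formed by the arcs of a 4-cycle `a b c d`. -/
def cycleImage4 {a b c d : V} (h1 : G.Adj a b) (h2 : G.Adj b c)
    (h3 : G.Adj c d) (h4 : G.Adj d a) : Set (ℝ × ℝ) :=
  Set.range ⇑(D.arc h1) ∪ Set.range ⇑(D.arc h2) ∪ Set.range ⇑(D.arc h3) ∪ Set.range ⇑(D.arc h4)

/-- The drawing has a separating 4-cycle: a 4-cycle whose curve has two vertices of the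
graph in different connected components of its complement (i.e. both the open interior
and the exterior of the curve contain a vertex). -/
def HasSeparating4Cycle : Prop :=
  ∃ (a b c d : V) (h1 : G.Adj a b) (h2 : G.Adj b c) (h3 : G.Adj c d) (h4 : G.Adj d a),
    a ≠ c ∧ b ≠ d ∧
    ∃ p q : V, D.pos p ∉ D.cycleImage4 h1 h2 h3 h4 ∧ D.pos q ∉ D.cycleImage4 h1 h2 h3 h4 ∧
      connectedComponentIn (D.cycleImage4 h1 h2 h3 h4)ᶜ (D.pos p) ≠
      connectedComponentIn (D.cycleImage4 h1 h2 h3 h4)ᶜ (D.pos q)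

/-- The point set of the induced drawing of a subgraph. -/
def subImage (H : G.Subgraph) : Set (ℝ × ℝ) :=
  D.pos '' H.verts ∪ ⋃ (u : V) (v : V) (h : H.Adj u v), Set.range ⇑(D.arc h.adj_sub)

/-- Faces of the induced drawing of a subgraph. -/
def IsFaceOfSub (H : G.Subgraph) (f : Set (ℝ × ℝ)) : Prop :=
  ∃ x ∉ D.subImage H, f = connectedComponentIn (D.subImage H)ᶜ x

/-- A face of the induced drawing of a subgraph has length 4. -/
def SubFaceLen4 (H : G.Subgraph) (f : Set (ℝ × ℝ)) : Prop :=
  ∃ (u v w x : V) (h1 : H.Adj u v) (h2 : H.Adj v w) (h3 : H.Adj w x) (h4 : H.Adj x u),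
    u ≠ w ∧ v ≠ x ∧
    frontier f =
      Set.range ⇑(D.arc h1.adj_sub) ∪ Set.range ⇑(D.arc h2.adj_sub) ∪
      Set.range ⇑(D.arc h3.adj_sub) ∪ Set.range ⇑(D.arc h4.adj_sub)

/-- The induced drawing of the subgraph `H` has a separating 4-cycle. -/
def SubHasSeparating4Cycle (H : G.Subgraph) : Prop :=
  ∃ (a b c d : V) (h1 : H.Adj a b) (h2 : H.Adj b c) (h3 : H.Adj c d) (h4 : H.Adj d a),
    a ≠ c ∧ b ≠ d ∧
    ∃ p ∈ H.verts, ∃ q ∈ H.verts,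
      D.pos p ∉ D.cycleImage4 h1.adj_sub h2.adj_sub h3.adj_sub h4.adj_sub ∧
      D.pos q ∉ D.cycleImage4 h1.adj_sub h2.adj_sub h3.adj_sub h4.adj_sub ∧
      connectedComponentIn (D.cycleImage4 h1.adj_sub h2.adj_sub h3.adj_sub h4.adj_sub)ᶜ (D.pos p) ≠
      connectedComponentIn (D.cycleImage4 h1.adj_sub h2.adj_sub h3.adj_sub h4.adj_sub)ᶜ (D.pos q)

/-- A subgraph `H` of a plane graph is 4-swept if it has no separating 4-cycle and every
face of `H` which is not a face of the whole drawing has length 4. -/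
def FourSwept (H : G.Subgraph) : Prop :=
  ¬ D.SubHasSeparating4Cycle H ∧
    ∀ f : Set (ℝ × ℝ), D.IsFaceOfSub H f → ¬ D.IsFace f → D.SubFaceLen4 H f

end PlaneDrawing

/-- `G` has a tree decomposition of width at most `w`. -/
def HasTreewidthLE {V : Type} (G : SimpleGraph V) (w : ℕ) : Prop :=
  ∃ (ι : Type) (T : SimpleGraph ι) (B : ι → Finset V),
    T.Connected ∧ T.IsAcyclic ∧
    (∀ v : V, ∃ i, v ∈ B i) ∧
    (∀ u v : V, G.Adj u v → ∃ i, u ∈ B i ∧ v ∈ B i) ∧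
    (∀ v : V, (T.induce {i | v ∈ B i}).Preconnected) ∧
    (∀ i, (B i).card ≤ w + 1)

/-!
Every vertex `v ∈ Q` sees a single color `c v` in `G - X`. Put `v` into each of the color
classes of `φ` other than `c v`, and drop it (and `X`) from its own class. The resulting three
sets are still independent, since `Q` is independent and a neighbor of `v` outside `X` has color
`c v`. Their sizes add up to `(n - |X ∪ Q|) + 2|Q| ≥ n - |X| + |Q|`, so one of them is large enough.
-/

open Finset

namespace SimpleGraph

lemma exists_color_of_monochromatic_neighbors {V α : Type} [Nonempty α] {G : SimpleGraph V}
    {X : Finset V} {φ : V → α} {v : V}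
    (hmono : ∀ u w : V, u ∉ X → w ∉ X → G.Adj v u → G.Adj v w → φ u = φ w) :
    ∃ c : α, ∀ u, u ∉ X → G.Adj v u → φ u = c := by
  by_cases h : ∃ u, u ∉ X ∧ G.Adj v u
  · obtain ⟨u, hu, hvu⟩ := h
    exact ⟨φ u, fun w hw hvw => hmono w u hw hu hvw hvu⟩
  · push Not at h
    exact ⟨Classical.arbitrary α, fun u hu hvu => absurd hvu (h u hu)⟩

variable {V α : Type} [Fintype V] [DecidableEq V] [DecidableEq α]

def extendedColorClass (X Q : Finset V) (φ c : V → α) (i : α) : Finset V :=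
  (X ∪ Q)ᶜ.filter (φ · = i) ∪ Q.filter (c · ≠ i)

lemma isIndep_extendedColorClass {G : SimpleGraph V} {X Q : Finset V} {φ c : V → α}
    (hQ : G.IsIndep ↑Q) (hproper : ∀ u v : V, u ∉ X → v ∉ X → G.Adj u v → φ u ≠ φ v)
    (hc : ∀ v ∈ Q, ∀ u, u ∉ X → G.Adj v u → φ u = c v) (i : α) :
    G.IsIndep ↑(extendedColorClass X Q φ c i) := by
  have key : ∀ u v, u ∈ (X ∪ Q)ᶜ.filter (φ · = i) → v ∈ extendedColorClass X Q φ c i →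
      ¬ G.Adj u v := by
    intro u v hu hv huv
    simp only [extendedColorClass, Finset.mem_union, mem_filter, Finset.mem_compl, not_or] at hu hv
    obtain ⟨⟨huX, -⟩, rfl⟩ := hu
    rcases hv with ⟨⟨hvX, -⟩, hφ⟩ | ⟨hvQ, hcv⟩
    · exact hproper u v huX hvX huv hφ.symm
    · exact hcv (hc v hvQ u huX huv.symm).symm
  intro u hu v hv huv
  rcases Finset.mem_union.mp hu with hu' | hu'
  · exact key u v hu' hv huv
  rcases Finset.mem_union.mp hv with hv' | hv'
  · exact key v u hv' hu huv.symm
  · exact hQ (mem_filter.mp hu').1 (mem_filter.mp hv').1 huv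

lemma sum_card_extendedColorClass [Fintype α] (X Q : Finset V) (φ c : V → α) :
    ∑ i, #(extendedColorClass X Q φ c i) = #(X ∪ Q)ᶜ + (Fintype.card α - 1) * #Q := by
  have hdisj : ∀ i, Disjoint ((X ∪ Q)ᶜ.filter (φ · = i)) (Q.filter (c · ≠ i)) := fun i =>
    disjoint_filter_filter (disjoint_compl_left.mono_left (compl_le_compl subset_union_right))
  have hfiber : ∑ i, #((X ∪ Q)ᶜ.filter (φ · = i)) = #(X ∪ Q)ᶜ :=
    (card_eq_sum_card_fiberwise fun v _ => mem_univ (φ v)).symm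
  have hQ : ∑ i, #(Q.filter (c · ≠ i)) = (Fintype.card α - 1) * #Q := by
    simp only [card_filter]
    rw [sum_comm, sum_const_nat fun v _ => ?_, mul_comm]
    rw [← card_filter, filter_ne, card_erase_of_mem (mem_univ _), card_univ]
  simp only [extendedColorClass, card_union_of_disjoint (hdisj _), sum_add_distrib, hfiber, hQ]

end SimpleGraph

theorem stmt1_general {V : Type} [Fintype V] (G : SimpleGraph V) (n : ℕ) (hn : Fintype.card V = n)
    (Q X : Finset V) (hQ : G.IsIndep ↑Q)
    (φ : V → Fin 3)
    (hproper : ∀ u v : V, u ∉ X → v ∉ X → G.Adj u v → φ u ≠ φ v)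
    (hmono : ∀ v ∈ Q, ∀ u w : V, u ∉ X → w ∉ X → G.Adj v u → G.Adj v w → φ u = φ w) :
    ∃ I : Finset V, G.IsIndep ↑I ∧ ((n : ℝ) - X.card + Q.card) / 3 ≤ I.card := by
  classical
  choose! c hc using fun v hv => SimpleGraph.exists_color_of_monochromatic_neighbors (hmono v hv)
  set S := SimpleGraph.extendedColorClass X Q φ c
  have hcount : n + #Q ≤ ∑ i, #(S i) + #X := by
    have hunion := card_union_le X Q
    have hcompl := card_compl_add_card (X ∪ Q)
    rw [SimpleGraph.sum_card_extendedColorClass, Fintype.card_fin]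
    omega
  have hsum : ∑ _i : Fin 3, ((n : ℝ) - #X + #Q) / 3 ≤ ∑ i, (#(S i) : ℝ) := by
    have : (n : ℝ) + #Q ≤ ∑ i, (#(S i) : ℝ) + #X := by exact_mod_cast hcount
    rw [sum_const, card_univ, Fintype.card_fin, nsmul_eq_mul, Nat.cast_ofNat]
    linarith
  obtain ⟨i, -, hi⟩ := exists_le_of_sum_le univ_nonempty hsum
  exact ⟨S i, SimpleGraph.isIndep_extendedColorClass hQ hproper hc i, hi⟩

/-- If `Q` is independent, `Q` and `X` are disjoint, and `G - X` has a proper 3-coloring in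
which the neighborhood of every vertex of `Q` is monochromatic, then `G` has an independent
set of size at least `(n - |X| + |Q|)/3`. -/
theorem stmt1 {V : Type} [Fintype V] (G : SimpleGraph V) (n : ℕ) (hn : Fintype.card V = n)
    (Q X : Finset V) (hdisj : Disjoint Q X) (hQ : G.IsIndep ↑Q)
    (φ : V → Fin 3)
    (hproper : ∀ u v : V, u ∉ X → v ∉ X → G.Adj u v → φ u ≠ φ v)
    (hmono : ∀ v ∈ Q, ∀ u w : V, u ∉ X → w ∉ X → G.Adj v u → G.Adj v w → φ u = φ w) :
    ∃ I : Finset V, G.IsIndep ↑I ∧ ((n : ℝ) - X.card + Q.card) / 3 ≤ I.card :=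
  stmt1_general G n hn Q X hQ φ hproper hmono
end

section
/- Let c, t ≥ 1 be integers and set K₀ = c^{2c} (2c+2)^{c+1} t^c. Let G be a bipartite graph with parts S and Z in which every vertex of S has degree at most c. Then there exist sets Q ⊆ S and X ⊆ Z such that |Q| ≥ |S|/K₀, |X| ≤ |Q|/t, and for all distinct u, v ∈ Q, every common neighbor of u and v belongs to X. -/
open Set

/-!
Write `N v` for the neighbourhood of `v ∈ S` and induct on a bound `i` for the sizes `|N v|`,
keeping `s·|X| ≤ i·|Q|` with `s = c t`. Call a vertex heavy if it lies in at least
`D = 2 i s M` of the sets, where `M` is the constant for `i - 1`. If at least half of `S` meets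
the heavy set `H`, remove `H` from every set and recurse: each of those sets loses a vertex, and
by double counting `|H| ≤ i |S| / D`, so putting `H` into `X` costs at most `|Q| / s`. Otherwise
at least half of `S` avoids `H`; each of these sets then meets fewer than `i D` of the others, so
a maximal pairwise disjoint subfamily has at least `|S| / (2 i D)` members and `X = ∅` works.
The constants multiply to `4^c (c!)^2 (c t)^c`, which is at most `K₀` because `2^c c! ≤ 2 c^c`.
-/

open Finset

section PairwiseCore

open Function

variable {α β : Type*} [DecidableEq β]

lemma exists_pairwise_subset_of_card_filter_not_le {p : α → α → Prop} [DecidableRel p]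
    (hp : ∀ u v, p u v → p v u) {S : Finset α} {k : ℕ}
    (hk : ∀ q ∈ S, #{v ∈ S | ¬ p q v} ≤ k) :
    ∃ Q ⊆ S, (Q : Set α).Pairwise p ∧ #S ≤ (k + 1) * #Q := by
  classical
  obtain ⟨Q, hQ, hmax⟩ :=
    (S.powerset.filter fun Q : Finset α => (Q : Set α).Pairwise p).exists_max_image card
      ⟨∅, by simp⟩
  rw [Finset.mem_filter, Finset.mem_powerset] at hQ
  obtain ⟨hQS, hQp⟩ := hQ
  have hcover : S ⊆ Q ∪ Q.biUnion fun q => {v ∈ S | ¬ p q v} := by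
    intro v hv
    by_contra hvQ
    simp only [Finset.mem_union, Finset.mem_biUnion, Finset.mem_filter, not_or, not_exists,
      not_and, not_not] at hvQ
    have hins : insert v Q ∈ S.powerset.filter fun Q : Finset α => (Q : Set α).Pairwise p := by
      rw [Finset.mem_filter, Finset.mem_powerset, coe_insert, Set.pairwise_insert]
      exact ⟨Finset.insert_subset hv hQS, hQp, fun q hq _ =>
        ⟨hp _ _ (hvQ.2 q hq hv), hvQ.2 q hq hv⟩⟩
    have := hmax _ hins
    rw [Finset.card_insert_of_notMem hvQ.1] at this
    omega
  refine ⟨Q, hQS, hQp, ?_⟩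
  calc #S ≤ #Q + #Q * k :=
        (Finset.card_le_card hcover).trans <| (Finset.card_union_le _ _).trans <|
          Nat.add_le_add_left (card_biUnion_le_card_mul _ _ _ fun q hq => hk q (hQS hq)) _
    _ = (k + 1) * #Q := by ring

variable (N : α → Finset β)

def HasPairwiseCore (S : Finset α) (M a b : ℕ) : Prop :=
  ∃ Q ⊆ S, ∃ X : Finset β, #S ≤ M * #Q ∧ a * #X ≤ b * #Q ∧
    (Q : Set α).Pairwise fun u v => N u ∩ N v ⊆ X

def heavyPoints (S : Finset α) (D : ℕ) : Finset β :=
  {z ∈ S.biUnion N | D ≤ #{v ∈ S | z ∈ N v}}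

variable {N} {S : Finset α} {M a b : ℕ}

lemma HasPairwiseCore.of_subset {T : Finset α} {m M' : ℕ} (h : HasPairwiseCore N T M a b)
    (hTS : T ⊆ S) (hS : #S ≤ m * #T) (hM : m * M ≤ M') : HasPairwiseCore N S M' a b := by
  obtain ⟨Q, hQT, X, hT, hX, hQX⟩ := h
  refine ⟨Q, hQT.trans hTS, X, ?_, hX, hQX⟩
  calc #S ≤ m * (M * #Q) := hS.trans (Nat.mul_le_mul_left m hT)
    _ = m * M * #Q := (mul_assoc _ _ _).symm
    _ ≤ M' * #Q := Nat.mul_le_mul_right _ hM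

lemma HasPairwiseCore.of_sdiff {H : Finset β} (h : HasPairwiseCore (fun v => N v \ H) S M a b)
    (hM : 0 < M) (hH : a * M * #H ≤ #S) : HasPairwiseCore N S M a (b + 1) := by
  obtain ⟨Q, hQS, X, hS, hX, hQX⟩ := h
  have hHQ : a * #H ≤ #Q :=
    Nat.le_of_mul_le_mul_left (by nlinarith) hM
  refine ⟨Q, hQS, X ∪ H, hS, ?_, fun u hu v hv huv w hw => ?_⟩
  · calc a * #(X ∪ H) ≤ a * #X + a * #H := by
          rw [← mul_add]; exact Nat.mul_le_mul_left a (Finset.card_union_le X H)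
      _ ≤ b * #Q + #Q := Nat.add_le_add hX hHQ
      _ = (b + 1) * #Q := by ring
  · rw [Finset.mem_inter] at hw
    by_cases hwH : w ∈ H
    · exact Finset.mem_union_right X hwH
    · exact Finset.mem_union_left H (hQX hu hv huv (by simp [hw, hwH]))

lemma hasPairwiseCore_of_card_le_of_card_filter_le [DecidableEq α] {k L : ℕ}
    (hN : ∀ v ∈ S, #(N v) ≤ k) (hL : ∀ v ∈ S, ∀ z ∈ N v, #{u ∈ S | z ∈ N u} ≤ L)
    (a b : ℕ) :
    HasPairwiseCore N S (k * L + 1) a b := by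
  have hconflict : ∀ q ∈ S, #{v ∈ S | ¬ (Disjoint on N) q v} ≤ k * L := by
    intro q hq
    calc #{v ∈ S | ¬ (Disjoint on N) q v}
        ≤ #((N q).biUnion fun z => {u ∈ S | z ∈ N u}) := by
          refine Finset.card_le_card fun v hv => ?_
          rw [Finset.mem_filter, Function.onFun, Finset.not_disjoint_iff] at hv
          obtain ⟨hvS, z, hzq, hzv⟩ := hv
          exact Finset.mem_biUnion.mpr ⟨z, hzq, Finset.mem_filter.mpr ⟨hvS, hzv⟩⟩
      _ ≤ #(N q) * L := card_biUnion_le_card_mul _ _ _ (hL q hq)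
      _ ≤ k * L := Nat.mul_le_mul_right L (hN q hq)
  obtain ⟨Q, hQS, hQ, hS⟩ := exists_pairwise_subset_of_card_filter_not_le
    (fun u v (h : Disjoint (N u) (N v)) => h.symm) hconflict
  exact ⟨Q, hQS, ∅, hS, by simp, fun u hu v hv huv =>
    (disjoint_iff_inter_eq_empty.mp (hQ hu hv huv)).le⟩

variable (N) in
lemma card_heavyPoints_mul_le {k : ℕ} (hN : ∀ v ∈ S, #(N v) ≤ k) (D : ℕ) :
    #(heavyPoints N S D) * D ≤ #S * k :=
  card_mul_le_card_mul (fun z v => z ∈ N v) (fun _ hz => (Finset.mem_filter.mp hz).2)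
    fun v hv => (Finset.card_le_card fun _ hz => (Finset.mem_filter.mp hz).2).trans (hN v hv)

end PairwiseCore

open Nat in
theorem hasPairwiseCore_of_card_le {α β : Type*} [DecidableEq α] [DecidableEq β] {s : ℕ}
    (hs : 0 < s) {i : ℕ} {N : α → Finset β} {S : Finset α} (hN : ∀ v ∈ S, #(N v) ≤ i) :
    HasPairwiseCore N S (4 ^ i * i ! ^ 2 * s ^ i) s i := by
  induction i generalizing N S with
  | zero =>
    refine ⟨S, subset_rfl, ∅, by simp, by simp, fun u hu v _ _ => ?_⟩
    simp [Finset.card_eq_zero.mp (Nat.le_zero.mp (hN u hu))]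
  | succ i ih =>
    set M := 4 ^ i * i ! ^ 2 * s ^ i
    have hM : 0 < M := by positivity
    set D := 2 * (i + 1) * s * M
    have hD : M ≤ D := Nat.le_mul_of_pos_left M (by positivity)
    rw [show 4 ^ (i + 1) * (i + 1)! ^ 2 * s ^ (i + 1) = 2 * ((i + 1) * D) by
      simp only [D, M, Nat.factorial_succ]; ring]
    set H := heavyPoints N S D
    set S₀ := {v ∈ S | Disjoint (N v) H}
    set S₁ := {v ∈ S | ¬ Disjoint (N v) H}
    have hH := card_heavyPoints_mul_le N hN D
    have hsplit : #S₀ + #S₁ = #S := card_filter_add_card_filter_not _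
    rcases le_or_gt #S (2 * #S₁) with hS₁ | hS₀
    · have core₁ := ih (N := fun v => N v \ H) (S := S₁) fun v hv => by
        rw [Finset.mem_filter, Finset.not_disjoint_iff_nonempty_inter] at hv
        have := card_sdiff_add_card_inter (N v) H
        have := hN v hv.1
        have := hv.2.card_pos
        omega
      have hHS₁ : s * M * #H ≤ #S₁ := by
        refine Nat.le_of_mul_le_mul_left ?_ (show 0 < 2 * (i + 1) by positivity)
        calc 2 * (i + 1) * (s * M * #H) = #H * D := by ring
          _ ≤ #S * (i + 1) := hH
          _ ≤ 2 * #S₁ * (i + 1) := Nat.mul_le_mul_right _ hS₁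
          _ = 2 * (i + 1) * #S₁ := by ring
      exact (core₁.of_sdiff hM hHS₁).of_subset (Finset.filter_subset _ _) hS₁ (by nlinarith)
    · have hlight : ∀ v ∈ S₀, ∀ z ∈ N v, #{u ∈ S₀ | z ∈ N u} ≤ D - 1 := by
        intro v hv z hz
        rw [Finset.mem_filter] at hv
        have hzH : z ∉ H := Finset.disjoint_left.mp hv.2 hz
        have hz' : z ∈ S.biUnion N := Finset.mem_biUnion.mpr ⟨v, hv.1, hz⟩
        simp only [H, heavyPoints, Finset.mem_filter, hz', true_and, not_le] at hzH
        have hmono : #{u ∈ S₀ | z ∈ N u} ≤ #{u ∈ S | z ∈ N u} :=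
          Finset.card_le_card (Finset.filter_subset_filter _ (Finset.filter_subset _ S))
        omega
      have core₀ := hasPairwiseCore_of_card_le_of_card_filter_le
        (fun v hv => hN v (Finset.mem_filter.mp hv).1) hlight s (i + 1)
      refine core₀.of_subset (Finset.filter_subset _ _) (show #S ≤ 2 * #S₀ by omega) ?_
      have := Nat.mul_sub_one (i + 1) D
      have := Nat.le_mul_of_pos_right (i + 1) (hM.trans_le hD)
      omega

lemma two_mul_pow_le_succ_pow {n : ℕ} (hn : 0 < n) : 2 * n ^ n ≤ (n + 1) ^ n := by
  have hinv : (0 : ℚ) ≤ 1 / n := by positivity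
  have hbernoulli := one_add_mul_le_pow (show (-2 : ℚ) ≤ 1 / n by linarith) n
  have hq : (2 * n ^ n : ℚ) ≤ (n + 1) ^ n :=
    calc (2 * n ^ n : ℚ) = (1 + n * (1 / n)) * n ^ n := by field_simp; ring
      _ ≤ (1 + 1 / n) ^ n * n ^ n := by gcongr
      _ = (n + 1) ^ n := by rw [← mul_pow]; field_simp
  exact_mod_cast hq

open Nat in
lemma two_pow_mul_factorial_le (n : ℕ) : 2 ^ n * n ! ≤ 2 * n ^ n := by
  induction n with
  | zero => simp
  | succ n ih =>
    rcases n.eq_zero_or_pos with rfl | hn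
    · simp
    calc 2 ^ (n + 1) * (n + 1)! = 2 * (n + 1) * (2 ^ n * n !) := by
          rw [factorial_succ]; ring
      _ ≤ 2 * (n + 1) * (2 * n ^ n) := Nat.mul_le_mul_left _ ih
      _ ≤ 2 * (n + 1) * (n + 1) ^ n := Nat.mul_le_mul_left _ (two_mul_pow_le_succ_pow hn)
      _ = 2 * (n + 1) ^ (n + 1) := by ring

open Nat in
lemma four_pow_mul_factorial_sq_mul_pow_le {c : ℕ} (hc : 1 ≤ c) (t : ℕ) :
    4 ^ c * c ! ^ 2 * (c * t) ^ c ≤ c ^ (2 * c) * (2 * c + 2) ^ (c + 1) * t ^ c := by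
  have hfac : 4 ^ c * c ! ^ 2 ≤ 4 * c ^ (2 * c) :=
    calc 4 ^ c * c ! ^ 2 = (2 ^ c * c !) ^ 2 := by
          rw [mul_pow, ← pow_mul, mul_comm c 2, pow_mul]; norm_num
      _ ≤ (2 * c ^ c) ^ 2 := Nat.pow_le_pow_left (two_pow_mul_factorial_le c) 2
      _ = 4 * c ^ (2 * c) := by ring
  have hpow : 4 * c ^ c ≤ (2 * c + 2) ^ (c + 1) :=
    calc 4 * c ^ c ≤ (2 * c + 2) * (2 * c + 2) ^ c :=
          Nat.mul_le_mul (by omega) (Nat.pow_le_pow_left (by omega) c)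
      _ = (2 * c + 2) ^ (c + 1) := (pow_succ' _ _).symm
  calc 4 ^ c * c ! ^ 2 * (c * t) ^ c ≤ 4 * c ^ (2 * c) * (c * t) ^ c :=
        Nat.mul_le_mul_right _ hfac
    _ = c ^ (2 * c) * (4 * c ^ c) * t ^ c := by ring
    _ ≤ c ^ (2 * c) * (2 * c + 2) ^ (c + 1) * t ^ c := by gcongr

theorem stmt2_general {V : Type} [Fintype V] [DecidableEq V] (G : SimpleGraph V) [DecidableRel G.Adj]
    (c t : ℕ) (hc : 1 ≤ c) (ht : 1 ≤ t)
    (K₀ : ℕ) (hK : K₀ = c ^ (2 * c) * (2 * c + 2) ^ (c + 1) * t ^ c)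
    (S Z : Finset V) (hSZ : Disjoint S Z)
    (hbip : ∀ u v : V, G.Adj u v → (u ∈ S ∧ v ∈ Z) ∨ (u ∈ Z ∧ v ∈ S))
    (hdeg : ∀ v ∈ S, G.degree v ≤ c) :
    ∃ Q X : Finset V, Q ⊆ S ∧ X ⊆ Z ∧
      (S.card : ℝ) / K₀ ≤ (Q.card : ℝ) ∧ (X.card : ℝ) ≤ (Q.card : ℝ) / t ∧
      ∀ u ∈ Q, ∀ v ∈ Q, u ≠ v → ∀ w : V, G.Adj u w → G.Adj v w → w ∈ X := by
  obtain ⟨Q, hQS, X, hS, hX, hQX⟩ :=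
    hasPairwiseCore_of_card_le (N := fun v => G.neighborFinset v) (Nat.mul_pos hc ht)
      fun v hv => (G.card_neighborFinset_eq_degree v).trans_le (hdeg v hv)
  have hnbr : ∀ u ∈ S, ∀ w, G.Adj u w → w ∈ Z := fun u hu w huw =>
    ((hbip u w huw).resolve_right fun h => Finset.disjoint_left.mp hSZ hu h.1).2
  have hK₀ : #S ≤ K₀ * #Q :=
    hS.trans (Nat.mul_le_mul_right _ (hK ▸ four_pow_mul_factorial_sq_mul_pow_le hc t))
  have htX : t * #X ≤ #Q :=
    Nat.le_of_mul_le_mul_left (by linarith) (show 0 < c from hc)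
  have htXZ : t * #(X ∩ Z) ≤ #Q :=
    (Nat.mul_le_mul_left t (Finset.card_le_card Finset.inter_subset_left)).trans htX
  refine ⟨Q, X ∩ Z, hQS, Finset.inter_subset_right, ?_, ?_, ?_⟩
  · rw [div_le_iff₀ (by rw [hK]; positivity), mul_comm]
    exact_mod_cast hK₀
  · rw [le_div_iff₀ (by exact_mod_cast ht), mul_comm]
    exact_mod_cast htXZ
  · intro u hu v hv huv w huw hvw
    have hw : w ∈ G.neighborFinset u ∩ G.neighborFinset v := by simp [huw, hvw]
    exact Finset.mem_inter.mpr ⟨hQX hu hv huv hw, hnbr u (hQS hu) w huw⟩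

/-- In a bipartite graph with parts `S`, `Z` where every vertex of `S` has degree at most `c`,
there are `Q ⊆ S` and `X ⊆ Z` with `|Q| ≥ |S|/K₀`, `|X| ≤ |Q|/t`, and all common neighbors
of distinct vertices of `Q` lying in `X`. -/
theorem stmt2 {V : Type} [Fintype V] [DecidableEq V] (G : SimpleGraph V) [DecidableRel G.Adj]
    (c t : ℕ) (hc : 1 ≤ c) (ht : 1 ≤ t)
    (K₀ : ℕ) (hK : K₀ = c ^ (2 * c) * (2 * c + 2) ^ (c + 1) * t ^ c)
    (S Z : Finset V) (hSZ : Disjoint S Z) (hparts : S ∪ Z = Finset.univ)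
    (hbip : ∀ u v : V, G.Adj u v → (u ∈ S ∧ v ∈ Z) ∨ (u ∈ Z ∧ v ∈ S))
    (hdeg : ∀ v ∈ S, G.degree v ≤ c) :
    ∃ Q X : Finset V, Q ⊆ S ∧ X ⊆ Z ∧
      (S.card : ℝ) / K₀ ≤ (Q.card : ℝ) ∧ (X.card : ℝ) ≤ (Q.card : ℝ) / t ∧
      ∀ u ∈ Q, ∀ v ∈ Q, u ≠ v → ∀ w : V, G.Adj u w → G.Adj v w → w ∈ X :=
  stmt2_general G c t hc ht K₀ hK S Z hSZ hbip hdeg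
end

section
/- If a graph G is a clique-sum of graphs G₁ and G₂, then the tree-width of G is at most the maximum of the tree-widths of G₁ and G₂. -/
open Set

/-!
Subtrees of a tree are path-convex, and path-convex sets in a connected graph have the Helly
property. Hence the clique `S₁ ∩ S₂`, which is finite because bags have at most `w + 1` vertices,
lies in a single bag `B₁ p` of a decomposition of `G₁` and in a single bag `B₂ q` of a
decomposition of `G₂`. Joining the two trees by the edge `p q` and cutting the bags down to `S₁`
and `S₂` respectively gives a tree decomposition of `G₁ ⊔ G₂ ≥ G` with no larger bags; the subtree
of a vertex of `S₁ ∩ S₂` stays connected because it contains both `p` and `q`.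
-/

namespace SimpleGraph

variable {V : Type*} {G : SimpleGraph V}

def IsPathConvex (G : SimpleGraph V) (S : Set V) : Prop :=
  ∀ ⦃x y : V⦄ (p : G.Walk x y), p.IsPath → x ∈ S → y ∈ S → ∀ z ∈ p.support, z ∈ S

theorem IsPathConvex.inter {S S' : Set V} (hS : G.IsPathConvex S) (hS' : G.IsPathConvex S') :
    G.IsPathConvex (S ∩ S') := fun _ _ p hp hx hy z hz =>
  ⟨hS p hp hx.1 hy.1 z hz, hS' p hp hx.2 hy.2 z hz⟩

theorem IsAcyclic.isPathConvex (hG : G.IsAcyclic) {S : Set V} (hS : (G.induce S).Preconnected) :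
    G.IsPathConvex S := by
  classical
  intro x y p hp hx hy z hz
  obtain ⟨q⟩ := hS ⟨x, hx⟩ ⟨y, hy⟩
  set q' := q.map (Embedding.induce S).toHom
  have hpq : p = q'.bypass :=
    congrArg Subtype.val ((hG.subsingleton_path x y).elim ⟨p, hp⟩ ⟨_, q'.bypass_isPath⟩)
  have hzq : z ∈ q'.support := q'.support_bypass_subset_support (hpq ▸ hz)
  rw [Walk.support_map] at hzq
  obtain ⟨⟨z', hz'⟩, -, rfl⟩ := List.mem_map.mp hzq
  exact hz'

theorem Walk.IsPath.exists_isPath_to_first_mem {S : Set V} {u v : V} {q : G.Walk u v}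
    (hq : q.IsPath) (hv : v ∈ S) :
    ∃ m ∈ S, ∃ q' : G.Walk u m, q'.IsPath ∧ (∀ z ∈ q'.support, z ∈ q.support) ∧
      ∀ z ∈ q'.support, z ∈ S → z = m := by
  induction q with
  | nil => exact ⟨_, hv, Walk.nil, .nil, fun z hz => hz, by simp⟩
  | @cons a b c h q ih =>
    by_cases ha : a ∈ S
    · exact ⟨a, ha, Walk.nil, .nil, by simp, by simp⟩
    obtain ⟨hq, haq⟩ := (Walk.cons_isPath_iff h q).mp hq
    obtain ⟨m, hm, q', hq', hsub, hfirst⟩ := ih hq hv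
    refine ⟨m, hm, Walk.cons h q', hq'.cons fun ha' => haq (hsub a ha'), ?_, ?_⟩
    · simp only [support_cons, List.mem_cons]
      rintro z (rfl | hz)
      · exact .inl rfl
      · exact .inr (hsub z hz)
    · simp only [support_cons, List.mem_cons]
      rintro z (rfl | hz) hzS
      · exact absurd hzS ha
      · exact hfirst z hz hzS

theorem IsPathConvex.inter_inter_nonempty (hG : G.Preconnected) {A B C : Set V}
    (hA : G.IsPathConvex A) (hB : G.IsPathConvex B) (hC : G.IsPathConvex C)
    (hAB : (A ∩ B).Nonempty) (hBC : (B ∩ C).Nonempty) (hCA : (C ∩ A).Nonempty) :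
    (A ∩ B ∩ C).Nonempty := by
  classical
  obtain ⟨a, haA, haB⟩ := hAB
  obtain ⟨b, hbB, hbC⟩ := hBC
  obtain ⟨c, hcC, hcA⟩ := hCA
  obtain ⟨r, hr⟩ := (hG a c).exists_isPath
  obtain ⟨q, hq⟩ := (hG b a).exists_isPath
  -- the median `m` of `a`, `b`, `c` is the first vertex of `q` on `r`
  obtain ⟨m, hmr, q₁, hq₁, hq₁q, hfirst⟩ :=
    hq.exists_isPath_to_first_mem (S := {z | z ∈ r.support}) r.start_mem_support
  set r₂ := r.dropUntil m hmr
  have hr₂ : r₂.support.Nodup := (hr.dropUntil hmr).support_nodup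
  -- `q₁` meets `r` only at `m`
  have hm : (q₁.append r₂).IsPath := by
    refine (Walk.isPath_def _).mpr ?_
    rw [Walk.support_append]
    refine hq₁.support_nodup.append (hr₂.sublist (List.tail_sublist _)) fun z hz₁ hz₂ => ?_
    obtain rfl := hfirst z hz₁ (r.support_dropUntil_subset_support hmr (List.mem_of_mem_tail hz₂))
    rw [← r₂.cons_tail_support] at hr₂
    exact (List.nodup_cons.mp hr₂).1 hz₂
  exact ⟨m, ⟨hA r hr haA hcA m hmr, hB q hq hbB haB m (hq₁q m q₁.end_mem_support)⟩,
    hC _ hm hbC hcC m (q₁.support_append _ ▸ List.mem_append_left _ q₁.end_mem_support)⟩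

theorem IsPathConvex.biInter_nonempty {α : Type*} (hG : G.Preconnected) {s : Finset α}
    (hs : s.Nonempty) {I : α → Set V} (hI : ∀ a ∈ s, G.IsPathConvex (I a))
    (hI₂ : ∀ a ∈ s, ∀ b ∈ s, (I a ∩ I b).Nonempty) : (⋂ a ∈ s, I a).Nonempty := by
  induction hs using Finset.Nonempty.cons_induction generalizing I with
  | singleton a => simpa using hI₂ a (Finset.mem_singleton_self a) a (Finset.mem_singleton_self a)
  | cons a s ha hs ih =>
    have ha' : a ∈ Finset.cons a s ha := Finset.mem_cons_self a s
    have hs' : ∀ b ∈ s, b ∈ Finset.cons a s ha := fun b => Finset.mem_cons_of_mem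
    obtain ⟨i, hi⟩ := ih (I := fun b => I b ∩ I a)
      (fun b hb => (hI b (hs' b hb)).inter (hI a ha'))
      (fun b hb c hc => by
        obtain ⟨i, ⟨hib, hic⟩, hia⟩ := inter_inter_nonempty hG (hI b (hs' b hb))
          (hI c (hs' c hc)) (hI a ha') (hI₂ b (hs' b hb) c (hs' c hc))
          (hI₂ c (hs' c hc) a ha') (hI₂ a ha' b (hs' b hb))
        exact ⟨i, ⟨hib, hia⟩, hic, hia⟩)
    simp only [mem_iInter, mem_inter_iff] at hi
    obtain ⟨b, hb⟩ := hs
    refine ⟨i, mem_iInter₂.mpr fun c hc => ?_⟩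
    rcases Finset.mem_cons.mp hc with rfl | hc
    · exact (hi b hb).2
    · exact (hi c hc).1

variable {W : Type*} {H : SimpleGraph W}

theorem Walk.IsCycle.induce {u : V} {c : G.Walk u u} (hc : c.IsCycle) {s : Set V}
    (hs : ∀ x ∈ c.support, x ∈ s) : (c.induce s hs).IsCycle :=
  (Walk.isCycle_map_iff_of_injective (Embedding.induce (G := G) s).injective).mp
    (by rwa [Walk.map_induce])

theorem IsAcyclic.sum (hG : G.IsAcyclic) (hH : H.IsAcyclic) : (G ⊕g H).IsAcyclic := by
  classical
  rintro (a | b) c hc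
  · refine Embedding.sumInl.isoInduceRange.isAcyclic_iff.mp hG _ (hc.induce fun y hy => ?_)
    obtain a' | b' := y
    · exact ⟨a', rfl⟩
    · exact (not_reachable_sum_inl_inr a b' (c.takeUntil _ hy).reachable).elim
  · refine Embedding.sumInr.isoInduceRange.isAcyclic_iff.mp hH _ (hc.induce fun y hy => ?_)
    obtain a' | b' := y
    · exact (not_reachable_sum_inl_inr a' b (c.takeUntil _ hy).reachable.symm).elim
    · exact ⟨b', rfl⟩

theorem Preconnected.induce_image {G' : SimpleGraph W} (f : G →g G') {s : Set V}
    (hs : (G.induce s).Preconnected) : (G'.induce (f '' s)).Preconnected :=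
  hs.map (induceHom f (mapsTo_image f s))
    ((mapsTo_image f s).restrict_surjective_iff.mpr (surjOn_image f s))

theorem preconnected_induce_sum_sup_edge {v : V} {w : W} {A : Set (V ⊕ W)}
    (hl : (G.induce (Sum.inl ⁻¹' A)).Preconnected) (hr : (H.induce (Sum.inr ⁻¹' A)).Preconnected)
    (hA : Sum.inl ⁻¹' A = ∅ ∨ Sum.inr ⁻¹' A = ∅ ∨ (Sum.inl v ∈ A ∧ Sum.inr w ∈ A)) :
    (((G ⊕g H) ⊔ edge (Sum.inl v) (Sum.inr w)).induce A).Preconnected := by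
  set T := (G ⊕g H) ⊔ edge (Sum.inl v) (Sum.inr w)
  have hl' : (T.induce (Sum.inl '' (Sum.inl ⁻¹' A))).Preconnected :=
    hl.induce_image ((Hom.ofLE le_sup_left).comp Embedding.sumInl.toHom)
  have hr' : (T.induce (Sum.inr '' (Sum.inr ⁻¹' A))).Preconnected :=
    hr.induce_image ((Hom.ofLE le_sup_left).comp Embedding.sumInr.toHom)
  rw [← image_preimage_inl_union_image_preimage_inr A]
  rcases hA with h | h | ⟨hv, hw⟩
  · rw [h, image_empty, empty_union]
    exact hr'
  · rw [h, image_empty, union_empty]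
    exact hl'
  · have hvw : T.Adj (Sum.inl v) (Sum.inr w) := by simp [T, edge]
    exact (connected_induce_union hl' hr' (mem_image_of_mem _ hv) (mem_image_of_mem _ hw)
      hvw).preconnected

end SimpleGraph

structure IsTreeDecomposition {V ι : Type*} (G : SimpleGraph V) (T : SimpleGraph ι)
    (B : ι → Finset V) : Prop where
  connected : T.Connected
  isAcyclic : T.IsAcyclic
  exists_mem_bag : ∀ v, ∃ i, v ∈ B i
  exists_adj_mem_bag : ∀ u v, G.Adj u v → ∃ i, u ∈ B i ∧ v ∈ B i
  preconnected_induce : ∀ v, (T.induce {i | v ∈ B i}).Preconnected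

theorem hasTreewidthLE_iff {V : Type} {G : SimpleGraph V} {w : ℕ} :
    HasTreewidthLE G w ↔ ∃ (ι : Type) (T : SimpleGraph ι) (B : ι → Finset V),
      IsTreeDecomposition G T B ∧ ∀ i, (B i).card ≤ w + 1 :=
  ⟨fun ⟨ι, T, B, h₁, h₂, h₃, h₄, h₅, h₆⟩ => ⟨ι, T, B, ⟨h₁, h₂, h₃, h₄, h₅⟩, h₆⟩,
    fun ⟨ι, T, B, ⟨h₁, h₂, h₃, h₄, h₅⟩, h₆⟩ => ⟨ι, T, B, h₁, h₂, h₃, h₄, h₅, h₆⟩⟩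

namespace IsTreeDecomposition

open SimpleGraph

variable {V ι : Type*} {G : SimpleGraph V} {T : SimpleGraph ι} {B : ι → Finset V}

theorem mono {G' : SimpleGraph V} (hD : IsTreeDecomposition G T B) (h : G' ≤ G) :
    IsTreeDecomposition G' T B :=
  { hD with exists_adj_mem_bag := fun u v huv => hD.exists_adj_mem_bag u v (h huv) }

theorem isPathConvex (hD : IsTreeDecomposition G T B) (v : V) :
    T.IsPathConvex {i | v ∈ B i} :=
  hD.isAcyclic.isPathConvex (hD.preconnected_induce v)

theorem exists_finset_subset_bag_of_isClique (hD : IsTreeDecomposition G T B) {s : Finset V}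
    (hs : G.IsClique (s : Set V)) : ∃ i, s ⊆ B i := by
  rcases s.eq_empty_or_nonempty with rfl | hne
  · obtain ⟨i⟩ := hD.connected.nonempty
    exact ⟨i, Finset.empty_subset _⟩
  obtain ⟨i, hi⟩ := IsPathConvex.biInter_nonempty hD.connected.preconnected hne
    (fun v _ => hD.isPathConvex v) fun u hu v hv => by
      by_cases huv : u = v
      · obtain ⟨i, hi⟩ := hD.exists_mem_bag u
        exact ⟨i, hi, huv ▸ hi⟩
      · exact hD.exists_adj_mem_bag u v (hs hu hv huv)
  exact ⟨i, fun v hv => mem_iInter₂.mp hi v hv⟩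

theorem exists_subset_bag_of_isClique (hD : IsTreeDecomposition G T B) {w : ℕ}
    (hw : ∀ i, (B i).card ≤ w + 1) {K : Set V} (hK : G.IsClique K) : ∃ i, K ⊆ B i := by
  have hK_fin : K.Finite := by
    by_contra hK_inf
    obtain ⟨t, htK, ht⟩ := Set.Infinite.exists_subset_card_eq hK_inf (w + 2)
    obtain ⟨i, hi⟩ := hD.exists_finset_subset_bag_of_isClique (hK.subset htK)
    have := (Finset.card_le_card hi).trans (hw i)
    omega
  obtain ⟨i, hi⟩ :=
    hD.exists_finset_subset_bag_of_isClique (s := hK_fin.toFinset) (by simpa using hK)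
  exact ⟨i, by simpa [← Finset.coe_subset] using hi⟩

theorem preconnected_induce_filter (hD : IsTreeDecomposition G T B) (S : Set V)
    [DecidablePred (· ∈ S)] (v : V) : (T.induce {i | v ∈ {x ∈ B i | x ∈ S}}).Preconnected := by
  by_cases hv : v ∈ S
  · have h : {i | v ∈ {x ∈ B i | x ∈ S}} = {i | v ∈ B i} := by ext; simp [hv]
    exact h ▸ hD.preconnected_induce v
  · have h : {i | v ∈ {x ∈ B i | x ∈ S}} = ∅ := by ext; simp [hv]
    exact h ▸ Preconnected.of_subsingleton

variable {ι₁ ι₂ : Type*} {G₁ G₂ : SimpleGraph V} {T₁ : SimpleGraph ι₁} {T₂ : SimpleGraph ι₂}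
  {B₁ : ι₁ → Finset V} {B₂ : ι₂ → Finset V}

theorem cliqueSum {S₁ S₂ : Set V} [DecidablePred (· ∈ S₁)] [DecidablePred (· ∈ S₂)]
    {p : ι₁} {q : ι₂}
    (hD₁ : IsTreeDecomposition G₁ T₁ B₁) (hD₂ : IsTreeDecomposition G₂ T₂ B₂)
    (hcover : S₁ ∪ S₂ = univ)
    (hG₁ : ∀ u v, G₁.Adj u v → u ∈ S₁ ∧ v ∈ S₁) (hG₂ : ∀ u v, G₂.Adj u v → u ∈ S₂ ∧ v ∈ S₂)
    (hp : S₁ ∩ S₂ ⊆ B₁ p) (hq : S₁ ∩ S₂ ⊆ B₂ q) :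
    IsTreeDecomposition (G₁ ⊔ G₂) ((T₁ ⊕g T₂) ⊔ edge (.inl p) (.inr q))
      (Sum.elim (fun i => {v ∈ B₁ i | v ∈ S₁}) (fun j => {v ∈ B₂ j | v ∈ S₂})) where
  connected := hD₁.connected.sum_sup_edge hD₂.connected
  isAcyclic := (hD₁.isAcyclic.sum hD₂.isAcyclic).sup_edge_of_not_reachable
    (not_reachable_sum_inl_inr p q)
  exists_mem_bag v := by
    rcases (hcover ▸ mem_univ v : v ∈ S₁ ∪ S₂) with hv | hv
    · obtain ⟨i, hi⟩ := hD₁.exists_mem_bag v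
      exact ⟨.inl i, by simp [hi, hv]⟩
    · obtain ⟨j, hj⟩ := hD₂.exists_mem_bag v
      exact ⟨.inr j, by simp [hj, hv]⟩
  exists_adj_mem_bag u v huv := by
    rcases huv with huv | huv
    · obtain ⟨i, hu, hv⟩ := hD₁.exists_adj_mem_bag u v huv
      exact ⟨.inl i, by simp [hu, hv, hG₁ u v huv]⟩
    · obtain ⟨j, hu, hv⟩ := hD₂.exists_adj_mem_bag u v huv
      exact ⟨.inr j, by simp [hu, hv, hG₂ u v huv]⟩
  preconnected_induce v := by
    refine preconnected_induce_sum_sup_edge (hD₁.preconnected_induce_filter S₁ v)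
      (hD₂.preconnected_induce_filter S₂ v) ?_
    by_cases hv₁ : v ∈ S₁
    · by_cases hv₂ : v ∈ S₂
      · exact .inr <| .inr
          ⟨by simpa [hv₁] using hp ⟨hv₁, hv₂⟩, by simpa [hv₂] using hq ⟨hv₁, hv₂⟩⟩
      · exact .inr <| .inl <| by ext; simp [hv₂]
    · exact .inl <| by ext; simp [hv₁]

end IsTreeDecomposition

/-- If `G` is a clique-sum of `G₁` and `G₂` then `tw(G) ≤ max (tw G₁) (tw G₂)`. -/
theorem stmt3 {V : Type} (G G₁ G₂ G₁' G₂' : SimpleGraph V) (S₁ S₂ : Set V)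
    (hcover : S₁ ∪ S₂ = Set.univ)
    (hG₁ : ∀ u v : V, G₁.Adj u v → u ∈ S₁ ∧ v ∈ S₁)
    (hG₂ : ∀ u v : V, G₂.Adj u v → u ∈ S₂ ∧ v ∈ S₂)
    (h1 : G₁' ≤ G₁) (h2 : G₂' ≤ G₂)
    (hG : G = G₁' ⊔ G₂')
    (hclique₁ : G₁.IsClique (S₁ ∩ S₂)) (hclique₂ : G₂.IsClique (S₁ ∩ S₂)) :
    ∀ w : ℕ, HasTreewidthLE G₁ w → HasTreewidthLE G₂ w → HasTreewidthLE G w := by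
  classical
  intro w hT₁ hT₂
  rw [hasTreewidthLE_iff] at hT₁ hT₂ ⊢
  obtain ⟨ι₁, T₁, B₁, hD₁, hw₁⟩ := hT₁
  obtain ⟨ι₂, T₂, B₂, hD₂, hw₂⟩ := hT₂
  obtain ⟨p, hp⟩ := hD₁.exists_subset_bag_of_isClique hw₁ hclique₁
  obtain ⟨q, hq⟩ := hD₂.exists_subset_bag_of_isClique hw₂ hclique₂
  refine ⟨ι₁ ⊕ ι₂, _, _, (hD₁.cliqueSum hD₂ hcover hG₁ hG₂ hp hq).mono (hG ▸ sup_le_sup h1 h2), ?_⟩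
  rintro (i | j)
  · exact (Finset.card_filter_le _ _).trans (hw₁ i)
  · exact (Finset.card_filter_le _ _).trans (hw₂ j)
end

section
/- Every graph G has an acyclic orientation in which every vertex has in-degree at most 2∇₀(G), where ∇₀(G) is the maximum of |E(G')|/|V(G')| over all subgraphs G' of G. -/
open Set

/-- `∇₀(G)`: the maximum of `|E(G')|/|V(G')|` over all nonempty subgraphs `G'` of `G`. -/
noncomputable def nabla0 {V : Type} [Fintype V] (G : SimpleGraph V) : ℝ :=
  sSup {x : ℝ | ∃ H : G.Subgraph, H.verts.Nonempty ∧
    x = (H.edgeSet.ncard : ℝ) / (H.verts.ncard : ℝ)}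

/-!
A vertex set `s` spans a subgraph with at most `∇₀(G)|s|` edges, so some vertex of `s` has at
most `2∇₀(G)` neighbours in `s`: `G` is `⌊2∇₀(G)⌋`-degenerate. Repeatedly removing such a vertex
ranks the vertices so that each has at most `2∇₀(G)` lower-ranked neighbours, and orienting every
edge towards its higher-ranked end gives the orientation; it is acyclic because ranks increase
along directed paths.
-/

open Finset

namespace SimpleGraph

variable {V : Type}

def IsDegenerate (G : SimpleGraph V) [DecidableRel G.Adj] (d : ℕ) : Prop :=
  ∀ s : Finset V, s.Nonempty → ∃ v ∈ s, #{u ∈ s | G.Adj u v} ≤ d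

theorem IsDegenerate.exists_injOn_rank {G : SimpleGraph V} [DecidableRel G.Adj] {d : ℕ}
    (hG : G.IsDegenerate d) (s : Finset V) :
    ∃ f : V → ℕ, Set.InjOn f s ∧ ∀ v ∈ s, #{u ∈ s | G.Adj u v ∧ f u < f v} ≤ d := by
  classical
  induction s using Finset.strongInduction with
  | _ s ih =>
  obtain rfl | hs := s.eq_empty_or_nonempty
  · exact ⟨fun _ => 0, by simp, by simp⟩
  obtain ⟨v, hv, hvd⟩ := hG s hs
  obtain ⟨f, hf, hfd⟩ := ih (s.erase v) (erase_ssubset hv)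
  set top := (s.erase v).sup f + 1
  have hlt : ∀ u ∈ s.erase v, f u < top := fun u hu => Nat.lt_succ_of_le (le_sup hu)
  set g := Function.update f v top
  have hgv : g v = top := Function.update_self ..
  have hg : ∀ u ∈ s.erase v, g u = f u := fun u hu => Function.update_of_ne (ne_of_mem_erase hu) ..
  refine ⟨g, ?_, fun u hu => ?_⟩
  · rw [← insert_erase hv, coe_insert, Set.injOn_insert (by simp)]
    refine ⟨hf.congr fun u hu => (hg u hu).symm, ?_⟩
    rintro ⟨u, hu, hgu⟩
    exact (hlt u hu).ne (by rw [← hg u hu, hgu, hgv])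
  by_cases huv : u = v
  · subst huv
    exact (Finset.card_le_card (monotone_filter_right s fun _ _ hw => hw.1)).trans hvd
  have hu' : u ∈ s.erase v := mem_erase.2 ⟨huv, hu⟩
  refine (Finset.card_le_card fun w hw => ?_).trans (hfd u hu')
  obtain ⟨hws, hwu, hgwu⟩ := mem_filter.1 hw
  have hwv : w ≠ v := by
    rintro rfl
    exact (hlt u hu').not_ge (by rw [← hg u hu', ← hgv]; exact hgwu.le)
  have hw' : w ∈ s.erase v := mem_erase.2 ⟨hwv, hws⟩
  rw [hg w hw', hg u hu'] at hgwu
  exact mem_filter.2 ⟨hw', hwu, hgwu⟩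

theorem Subgraph.sum_degree_eq_two_mul_ncard_edgeSet {G : SimpleGraph V} (H : G.Subgraph)
    [Fintype H.verts] [∀ v, Fintype (H.neighborSet v)] :
    ∑ v ∈ H.verts.toFinset, H.degree v = 2 * H.edgeSet.ncard := by
  classical
  have hcoe : #H.coe.edgeFinset = H.edgeSet.ncard := by
    rw [← Set.ncard_coe_finset, coe_edgeFinset, ← H.image_coe_edgeSet_coe,
      Set.ncard_image_of_injective _ (Sym2.map.injective Subtype.val_injective)]
  rw [← hcoe, ← H.coe.sum_degrees_eq_twice_card_edges, ← Finset.sum_set_coe]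
  exact Finset.sum_congr rfl fun v _ => by convert (H.coe_degree v).symm

theorem Subgraph.degree_induce_top {G : SimpleGraph V} [DecidableRel G.Adj] (s : Finset V)
    {v : V} (hv : v ∈ s) [Fintype (((⊤ : G.Subgraph).induce s).neighborSet v)] :
    ((⊤ : G.Subgraph).induce s).degree v = #{u ∈ s | G.Adj u v} := by
  rw [← finset_card_neighborSet_eq_degree]
  congr 1
  ext u
  simp [hv, G.adj_comm v u]

section Nabla

variable [Fintype V] {G : SimpleGraph V}

theorem nabla0_nonneg (G : SimpleGraph V) : 0 ≤ nabla0 G :=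
  Real.sSup_nonneg fun _ ⟨_, _, hx⟩ => hx ▸ by positivity

theorem Subgraph.ncard_edgeSet_div_ncard_verts_le_nabla0 (H : G.Subgraph)
    (hH : H.verts.Nonempty) : (H.edgeSet.ncard : ℝ) / H.verts.ncard ≤ nabla0 G := by
  refine le_csSup ⟨G.edgeSet.ncard, ?_⟩ ⟨H, hH, rfl⟩
  rintro _ ⟨H', hH', rfl⟩
  calc (H'.edgeSet.ncard : ℝ) / H'.verts.ncard
      ≤ H'.edgeSet.ncard :=
        div_le_self (by positivity) (by exact_mod_cast (Set.ncard_pos H'.verts.toFinite).2 hH')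
    _ ≤ G.edgeSet.ncard := by exact_mod_cast Set.ncard_le_ncard H'.edgeSet_subset

theorem Subgraph.exists_degree_le_two_mul_nabla0 (H : G.Subgraph)
    [∀ v, Fintype (H.neighborSet v)] (hH : H.verts.Nonempty) :
    ∃ v ∈ H.verts, (H.degree v : ℝ) ≤ 2 * nabla0 G := by
  classical
  have hcard : (0 : ℝ) < H.verts.ncard := by
    exact_mod_cast (Set.ncard_pos H.verts.toFinite).2 hH
  have hsum : ∑ v ∈ H.verts.toFinset, (H.degree v : ℝ) ≤
      ∑ _v ∈ H.verts.toFinset, 2 * nabla0 G := by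
    rw [sum_const, nsmul_eq_mul, ← Set.ncard_eq_toFinset_card', ← Nat.cast_sum,
      H.sum_degree_eq_two_mul_ncard_edgeSet, Nat.cast_mul, Nat.cast_two, mul_left_comm]
    gcongr
    exact (div_le_iff₀' hcard).1 (H.ncard_edgeSet_div_ncard_verts_le_nabla0 hH)
  obtain ⟨v, hv, hle⟩ := exists_le_of_sum_le (Set.toFinset_nonempty.2 hH) hsum
  exact ⟨v, Set.mem_toFinset.1 hv, hle⟩

theorem isDegenerate_floor_two_mul_nabla0 [DecidableRel G.Adj] :
    G.IsDegenerate ⌊2 * nabla0 G⌋₊ := by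
  classical
  intro s hs
  obtain ⟨v, hv, hle⟩ :=
    ((⊤ : G.Subgraph).induce s).exists_degree_le_two_mul_nabla0 (by simpa using hs)
  rw [Subgraph.degree_induce_top s hv] at hle
  exact ⟨v, hv, Nat.le_floor hle⟩

end Nabla

end SimpleGraph

/-- Every graph has an acyclic orientation with in-degrees at most `2∇₀(G)`. -/
theorem stmt13 {V : Type} [Fintype V] (G : SimpleGraph V) :
    ∃ o : V → V → Prop,
      (∀ u v : V, G.Adj u v ↔ (o u v ∨ o v u)) ∧
      (∀ u v : V, o u v → ¬ o v u) ∧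
      (¬ ∃ v : V, Relation.TransGen o v v) ∧
      (∀ v : V, ({u : V | o u v}.ncard : ℝ) ≤ 2 * nabla0 G) := by
  classical
  obtain ⟨f, hf, hdeg⟩ := G.isDegenerate_floor_two_mul_nabla0.exists_injOn_rank univ
  refine ⟨fun u v => G.Adj u v ∧ f u < f v, fun u v => ?_, fun u v huv hvu => huv.2.not_gt hvu.2,
    fun ⟨v, hv⟩ => ?_, fun v => ?_⟩
  · refine ⟨fun h => ?_, by rintro (⟨h, -⟩ | ⟨h, -⟩) <;> [exact h; exact h.symm]⟩
    rcases (hf.ne_iff (mem_univ u) (mem_univ v)).2 h.ne |>.lt_or_gt with h' | h'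
    exacts [Or.inl ⟨h, h'⟩, Or.inr ⟨h.symm, h'⟩]
  · have hlt : Relation.TransGen (· < ·) (f v) (f v) := hv.lift f fun _ _ h => h.2
    rw [Relation.transGen_eq_self] at hlt
    exact lt_irrefl _ hlt
  · calc ({u | G.Adj u v ∧ f u < f v}.ncard : ℝ)
        = #{u | G.Adj u v ∧ f u < f v} := by rw [← Set.ncard_coe_finset, coe_filter_univ]
      _ ≤ ⌊2 * nabla0 G⌋₊ := by exact_mod_cast hdeg v (mem_univ v)
      _ ≤ 2 * nabla0 G := Nat.floor_le (by linarith [G.nabla0_nonneg])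
end

section
/- For every a ≥ 1, the graph H_a that is the disjoint union of a stars, each with a leaves, has the following property with S = V(H_a): for every r ≥ 0 and every set X ⊆ V(H_a) with |X| = r, any subset of S that is 2-scattered in H_a − X has size at most ra + (a − r), which is O(√|S|) for fixed r. -/
open Set

/-- `Q` is `d`-scattered in `H - X`: any walk between distinct vertices of `Q` avoiding `X`
has length greater than `d`. -/
def ScatteredIn {V : Type} (H : SimpleGraph V) (d : ℕ) (X : Set V) (Q : Set V) : Prop :=
  ∀ ⦃u⦄, u ∈ Q → ∀ ⦃v⦄, v ∈ Q → u ≠ v →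
    ∀ p : H.Walk u v, (∀ w ∈ p.support, w ∉ X) → d < p.length

/-- The disjoint union of `a` stars, each with `a` leaves: `(i, none)` is the center of the
`i`-th star and `(i, some j)` its `j`-th leaf. -/
def starUnion (a : ℕ) : SimpleGraph (Fin a × Option (Fin a)) where
  Adj p q := p.1 = q.1 ∧ ((p.2 = none ∧ q.2 ≠ none) ∨ (p.2 ≠ none ∧ q.2 = none))
  symm := ⟨by intro p q h; exact ⟨h.1.symm, by tauto⟩⟩
  loopless := ⟨by intro p h; tauto⟩

/-
Two distinct vertices of the same star are at distance at most 2 through its centre, so once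
the centre survives in `H_a - X` a 2-scattered set meets that star at most once; a star whose
centre lies in `X` contributes at most its `a` leaves. If `k ≤ r` centres are removed, this
gives at most `k * a + (a - k) ≤ r * a + (a - r)` vertices.
-/

namespace ScatteredIn

variable {V : Type} {H : SimpleGraph V} {d : ℕ} {X Q : Set V} {u v w : V}

theorem not_adj (hQ : ScatteredIn H d X Q) (hd : 1 ≤ d) (hQX : Disjoint Q X)
    (hu : u ∈ Q) (hv : v ∈ Q) : ¬ H.Adj u v := fun huv => by
  have := hQ hu hv huv.ne huv.toWalk (by
    simp [hQX.notMem_of_mem_left hu, hQX.notMem_of_mem_left hv])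
  simp at this
  omega

theorem eq_of_adj_of_adj (hQ : ScatteredIn H d X Q) (hd : 2 ≤ d) (hQX : Disjoint Q X)
    (hu : u ∈ Q) (hv : v ∈ Q) (hw : w ∉ X) (huw : H.Adj u w) (hwv : H.Adj w v) : u = v := by
  by_contra huv
  have := hQ hu hv huv (.cons huw hwv.toWalk) (by
    simp [hQX.notMem_of_mem_left hu, hQX.notMem_of_mem_left hv, hw])
  simp at this
  omega

end ScatteredIn

namespace starUnion

variable {a : ℕ}

theorem adj_center_leaf (i j : Fin a) : (starUnion a).Adj (i, none) (i, some j) :=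
  ⟨rfl, .inl ⟨rfl, Option.some_ne_none j⟩⟩

theorem eq_of_scatteredIn {X Q : Set (Fin a × Option (Fin a))}
    (hQ : ScatteredIn (starUnion a) 2 X Q) (hQX : Disjoint Q X) {i : Fin a}
    (hi : (i, none) ∉ X) {u v : Fin a × Option (Fin a)} (hu : u ∈ Q) (hv : v ∈ Q)
    (hui : u.1 = i) (hvi : v.1 = i) : u = v := by
  obtain ⟨_, u | j⟩ := u <;> obtain ⟨_, v | j'⟩ := v <;> subst hui hvi
  · rfl
  · exact (hQ.not_adj one_le_two hQX hu hv (adj_center_leaf _ _)).elim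
  · exact (hQ.not_adj one_le_two hQX hu hv (adj_center_leaf _ _).symm).elim
  · exact hQ.eq_of_adj_of_adj le_rfl hQX hu hv hi (adj_center_leaf _ _).symm
      (adj_center_leaf _ _)

theorem card_filter_fst_eq_le {X Q : Finset (Fin a × Option (Fin a))}
    (hQ : ScatteredIn (starUnion a) 2 X Q) (hQX : Disjoint Q X) (i : Fin a) :
    (Q.filter (·.1 = i)).card ≤ if (i, none) ∈ X then a else 1 := by
  split_ifs with hi
  · have hsub : Q.filter (·.1 = i) ⊆ Finset.univ.image fun j => (i, some j) := by
      rintro ⟨_, u | j⟩ hu <;> obtain ⟨huQ, rfl⟩ := Finset.mem_filter.mp hu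
      · exact (Finset.disjoint_left.mp hQX huQ hi).elim
      · exact Finset.mem_image_of_mem _ (Finset.mem_univ j)
    simpa using (Finset.card_le_card hsub).trans Finset.card_image_le
  · refine Finset.card_le_one.mpr fun u hu v hv => ?_
    rw [Finset.mem_filter] at hu hv
    exact eq_of_scatteredIn hQ (Finset.disjoint_coe.mpr hQX) (by simpa using hi)
      hu.1 hv.1 hu.2 hv.2

end starUnion

theorem Finset.sum_ite_mem_const_one {ι : Type} [Fintype ι] [DecidableEq ι] (C : Finset ι)
    (a : ℕ) : ∑ i, (if i ∈ C then a else 1) = C.card * a + (Fintype.card ι - C.card) := by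
  have := Finset.card_filter_add_card_filter_not (s := Finset.univ) (· ∈ C)
  simp only [Finset.filter_univ_mem, Finset.card_univ] at this
  rw [Finset.sum_ite, Finset.filter_univ_mem]
  simp only [Finset.sum_const, smul_eq_mul, mul_one]
  omega

theorem Nat.mul_add_sub_le_mul_add_sub {a k r : ℕ} (hkr : k ≤ r) :
    k * a + (a - k) ≤ r * a + (a - r) := by
  obtain ⟨t, rfl⟩ := Nat.exists_eq_add_of_le hkr
  rcases Nat.eq_zero_or_pos a with rfl | ha
  · simp
  · have : t ≤ t * a := Nat.le_mul_of_pos_right t ha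
    rw [add_mul]
    omega

theorem stmt15_general (a r : ℕ)
    (X : Finset (Fin a × Option (Fin a))) (hX : X.card = r)
    (Q : Finset (Fin a × Option (Fin a))) (hQX : Disjoint Q X)
    (hscat : ScatteredIn (starUnion a) 2 ↑X ↑Q) :
    Q.card ≤ r * a + (a - r) := by
  set C := Finset.univ.filter fun i : Fin a => (i, none) ∈ X
  have hC : C.card ≤ r := hX ▸ Finset.card_le_card_of_injOn (fun i => (i, none))
    (fun i hi => (Finset.mem_filter.mp hi).2) (fun _ _ _ _ h => congrArg Prod.fst h)
  calc Q.card = ∑ i, (Q.filter (·.1 = i)).card :=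
        Finset.card_eq_sum_card_fiberwise fun _ _ => Finset.mem_univ _
    _ ≤ ∑ i, if i ∈ C then a else 1 := Finset.sum_le_sum fun i _ => by
        simpa [C] using starUnion.card_filter_fst_eq_le hscat hQX i
    _ = C.card * a + (a - C.card) := by rw [Finset.sum_ite_mem_const_one, Fintype.card_fin]
    _ ≤ r * a + (a - r) := Nat.mul_add_sub_le_mul_add_sub hC

/-- In `H_a`, after removing any set `X` of `r` vertices, every 2-scattered set disjoint
from `X` has at most `ra + (a - r)` vertices. -/
theorem stmt15 (a r : ℕ) (ha : 1 ≤ a)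
    (X : Finset (Fin a × Option (Fin a))) (hX : X.card = r)
    (Q : Finset (Fin a × Option (Fin a))) (hQX : Disjoint Q X)
    (hscat : ScatteredIn (starUnion a) 2 ↑X ↑Q) :
    Q.card ≤ r * a + (a - r) :=
  stmt15_general a r X hX Q hQX hscat
end
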